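/- arXiv:1506.07675 — 9 statements merged into one kernel-verified Lean document; each statement's English description precedes it below -/
import Mathlib

section
/- Let M be a binary matrix admitting a conflict-free row split M'. Then for every row r_i of M, with R'_i the set of split rows of r_i in M', we have |R'_i| ≥ χ(G_{M,r_i}), the chromatic number of the conflict graph of (M, r_i). -/
/-! Common definitions: binary matrices, conflicts, row splits, conflict graphs,
containment, transitive orientations. -/

namespace MPP

variable {α β : Type*}

/-- Columns `i` and `j` of the binary matrix `M` are in conflict. -/
def InConflict (M : α → β → Bool) (i j : β) : Prop :=
  ∃ r r' r'' : α, M r i = true ∧ M r j = true ∧ M r' i = false ∧ M r' j = true ∧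
    M r'' i = true ∧ M r'' j = false

theorem InConflict.symm {M : α → β → Bool} {i j : β} (h : InConflict M i j) :
    InConflict M j i := by
  obtain ⟨r, r', r'', h1, h2, h3, h4, h5, h6⟩ := h
  exact ⟨r, r'', r', h2, h1, h6, h5, h4, h3⟩

theorem InConflict.ne {M : α → β → Bool} {i j : β} (h : InConflict M i j) : i ≠ j := by
  rintro rfl
  obtain ⟨r, r', r'', _, _, h3, h4, _, _⟩ := h
  rw [h3] at h4
  exact Bool.false_ne_true h4

/-- A binary matrix is conflict-free if no two of its columns are in conflict. -/
def ConflictFree (M : α → β → Bool) : Prop := ∀ i j : β, ¬ InConflict M i j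

/-- Column `i` of `M` is contained in column `j`. -/
def Contained (M : α → β → Bool) (i j : β) : Prop :=
  ∀ k : α, M k i = true → M k j = true

instance {α β : Type*} [Fintype α] (M : α → β → Bool) (i j : β) :
    Decidable (Contained M i j) :=
  inferInstanceAs (Decidable (∀ k : α, M k i = true → M k j = true))

/-- The conflict graph of a binary matrix `M`: vertices are all columns,
adjacent iff in conflict. -/
def conflictGraphAll (M : α → β → Bool) : SimpleGraph β where
  Adj i j := InConflict M i j
  symm := ⟨fun _ _ h => h.symm⟩
  loopless := ⟨fun _ h => h.ne rfl⟩

/-- The conflict graph `G_{M,r}`: vertices are the columns with a `1` in row `r`,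
adjacent iff the corresponding columns of `M` are in conflict. -/
def conflictGraph (M : α → β → Bool) (r : α) : SimpleGraph {j : β // M r j = true} where
  Adj a b := InConflict M a.1 b.1
  symm := ⟨fun _ _ h => h.symm⟩
  loopless := ⟨fun _ h => h.ne rfl⟩

/-- `M'` is a row split of `M` via the assignment `f` sending each row of `M'` to the row
of `M` it splits: each row `i` of `M` is the bitwise OR of the rows of `M'` mapped to `i`. -/
def IsRowSplit {α' : Type*} (M : α → β → Bool) (M' : α' → β → Bool) (f : α' → α) : Prop :=
  ∀ (i : α) (j : β), M i j = true ↔ ∃ k : α', f k = i ∧ M' k j = true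

/-- `γ̄(M)`: the minimum number of rows of a conflict-free row split of `M`. -/
noncomputable def gammaBar (M : α → β → Bool) : ℕ :=
  sInf {k : ℕ | ∃ (M' : Fin k → β → Bool) (f : Fin k → α),
    IsRowSplit M M' f ∧ ConflictFree M'}

/-- `η̄(M)`: the minimum number of pairwise distinct rows of a conflict-free row split of `M`. -/
noncomputable def etaBar (M : α → β → Bool) : ℕ :=
  sInf {d : ℕ | ∃ (k : ℕ) (M' : Fin k → β → Bool) (f : Fin k → α),
    IsRowSplit M M' f ∧ ConflictFree M' ∧ Nat.card (Set.range M') = d}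

/-- `o` is a transitive orientation of the graph `G`: it assigns to each edge `{u,v}`
exactly one of `(u,v)`, `(v,u)`, and is transitive. -/
def IsTransitiveOrientation {V : Type*} (G : SimpleGraph V) (o : V → V → Prop) : Prop :=
  (∀ u v, o u v → G.Adj u v) ∧
  (∀ u v, G.Adj u v → (o u v ↔ ¬ o v u)) ∧
  (∀ u v w, o u v → o v w → o u w)

/-- A graph is transitively orientable if it admits a transitive orientation. -/
def TransitivelyOrientable {V : Type*} (G : SimpleGraph V) : Prop :=
  ∃ o : V → V → Prop, IsTransitiveOrientation G o

/-- The undirected containment graph `H_M`: vertices are the columns of `M`, two distinct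
columns adjacent iff one is contained in the other. -/
def containmentGraph (M : α → β → Bool) : SimpleGraph β where
  Adj i j := i ≠ j ∧ (Contained M i j ∨ Contained M j i)
  symm := ⟨fun _ _ h => ⟨h.1.symm, h.2.symm⟩⟩
  loopless := ⟨fun _ h => h.1 rfl⟩

/-- In the directed containment graph `H⃗_{M,r}` (on the columns with a `1` in row `r`,
with an arc from `c_i` to `c_j` iff `i ≠ j` and `c_i` is contained in `c_j`),
the vertex `j` is a source, i.e., has no incoming arc. -/
def IsSourceCol (M : α → β → Bool) (r : α) (j : {c : β // M r c = true}) : Prop :=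
  ∀ i : {c : β // M r c = true}, i ≠ j → ¬ Contained M i.1 j.1

/-- `σ(M,r)`: the number of sources of the directed containment graph `H⃗_{M,r}`. -/
noncomputable def sigmaMr (M : α → β → Bool) (r : α) : ℕ :=
  Nat.card {j : {c : β // M r c = true} // IsSourceCol M r j}

end MPP

/-!
Colour each column `j` of `G_{M,i}` by a split row of row `i` that has a `1` in column `j`.
If two conflicting columns of `M` received the same split row `k`, then `k` would be a common
`1`-row for them in `M'`, while the rows witnessing the conflict in `M` are inherited by split
rows; so the two columns would be in conflict in `M'` as well.
-/

namespace MPP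

variable {α α' β : Type*} {M : α → β → Bool} {M' : α' → β → Bool} {f : α' → α}

theorem IsRowSplit.eq_true_of_split (hsplit : IsRowSplit M M' f) {k : α'} {j : β}
    (hk : M' k j = true) : M (f k) j = true :=
  (hsplit (f k) j).2 ⟨k, rfl, hk⟩

theorem IsRowSplit.eq_false_of_split (hsplit : IsRowSplit M M' f) {k : α'} {j : β}
    (hj : M (f k) j = false) : M' k j = false :=
  Bool.eq_false_iff.2 fun hk => by simp [hsplit.eq_true_of_split hk] at hj

theorem IsRowSplit.inConflict (hsplit : IsRowSplit M M' f) {a b : β} (hab : InConflict M a b)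
    {k : α'} (hka : M' k a = true) (hkb : M' k b = true) : InConflict M' a b := by
  obtain ⟨-, r', r'', -, -, hr'a, hr'b, hr''a, hr''b⟩ := hab
  obtain ⟨k', rfl, hk'b⟩ := (hsplit r' b).1 hr'b
  obtain ⟨k'', rfl, hk''a⟩ := (hsplit r'' a).1 hr''a
  exact ⟨k, k', k'', hka, hkb, hsplit.eq_false_of_split hr'a, hk'b, hk''a,
    hsplit.eq_false_of_split hr''b⟩

theorem IsRowSplit.exists_split_row (hsplit : IsRowSplit M M' f) {i : α} {j : β}
    (hij : M i j = true) : ∃ k : {k : α' // f k = i}, M' k j = true := by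
  obtain ⟨k, hk, hkj⟩ := (hsplit i j).1 hij
  exact ⟨⟨k, hk⟩, hkj⟩

noncomputable def IsRowSplit.splitRowColoring (hsplit : IsRowSplit M M' f)
    (hcf : ConflictFree M') (i : α) : (conflictGraph M i).Coloring {k : α' // f k = i} :=
  SimpleGraph.Coloring.mk (fun a => (hsplit.exists_split_row a.2).choose) fun {a b} hab hcolor =>
    hcf a b <| hsplit.inConflict hab (hsplit.exists_split_row a.2).choose_spec
      (hcolor ▸ (hsplit.exists_split_row b.2).choose_spec)

/-- Lemma 1: if `M'` is a conflict-free row split of `M`, then for every row `i` of `M`,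
the number of split rows of row `i` is at least the chromatic number of `G_{M,i}`. -/
theorem stmt_0 {m n m' : ℕ} (M : Fin m → Fin n → Bool) (M' : Fin m' → Fin n → Bool)
    (f : Fin m' → Fin m) (hsplit : IsRowSplit M M' f) (hcf : ConflictFree M') (i : Fin m) :
    (conflictGraph M i).chromaticNumber ≤
      ((Finset.univ.filter fun k : Fin m' => f k = i).card : ℕ∞) := by
  rw [← Fintype.card_subtype]
  exact (hsplit.splitRowColoring hcf i).colorable.chromaticNumber_le

end MPP
end

section
/- For every binary matrix M, γ̄(M) ≥ Σ_r χ(G_{M,r}), where the sum runs over all rows r of M. -/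
/-! A conflict-free row split `M'` of `M` colours each conflict graph `G_{M,r}`: give a
column with a `1` in row `r` the index of some row of `M'` over `r` in which it has a `1`.
Two conflicting columns of `M` never get the same colour, since the rows witnessing their
conflict in `M` are ORs of rows of `M'`, which would then witness a conflict in `M'`.
Hence `χ(G_{M,r})` is at most the number of rows of `M'` over `r`, and summing over `r`
bounds `Σ_r χ(G_{M,r})` by the number of rows of `M'`. -/

namespace MPP

variable {α α' β : Type*} {M : α → β → Bool} {M' : α' → β → Bool} {f : α' → α}

namespace IsRowSplit

theorem eq_false_of_eq_false (hs : IsRowSplit M M' f) {t : α'} {j : β}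
    (hj : M (f t) j = false) : M' t j = false :=
  Bool.eq_false_iff.mpr fun h => by simpa [hj] using (hs (f t) j).mpr ⟨t, rfl, h⟩

theorem inConflict_of_inConflict (hs : IsRowSplit M M' f) {a b : β} (hab : InConflict M a b)
    {t : α'} (ha : M' t a = true) (hb : M' t b = true) : InConflict M' a b := by
  obtain ⟨-, s', s'', -, -, hs'a, hs'b, hs''a, hs''b⟩ := hab
  obtain ⟨t', rfl, ht'b⟩ := (hs s' b).mp hs'b
  obtain ⟨t'', rfl, ht''a⟩ := (hs s'' a).mp hs''a
  exact ⟨t, t', t'', ha, hb, hs.eq_false_of_eq_false hs'a, ht'b, ht''a,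
    hs.eq_false_of_eq_false hs''b⟩

noncomputable def conflictGraphColoring (hs : IsRowSplit M M' f) (hc : ConflictFree M')
    (r : α) : (conflictGraph M r).Coloring {t : α' // f t = r} :=
  have hrow (j : {c : β // M r c = true}) : ∃ t, f t = r ∧ M' t j = true := (hs r j).mp j.2
  SimpleGraph.Coloring.mk (fun j => ⟨(hrow j).choose, (hrow j).choose_spec.1⟩) <| by
    intro a b hab hcol
    have hrows : (hrow a).choose = (hrow b).choose := congrArg Subtype.val hcol
    have hb : M' (hrow a).choose b = true := hrows ▸ (hrow b).choose_spec.2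
    exact hc a b (hs.inConflict_of_inConflict hab (hrow a).choose_spec.2 hb)

theorem chromaticNumber_conflictGraph_le [Fintype α'] [DecidableEq α] (hs : IsRowSplit M M' f)
    (hc : ConflictFree M') (r : α) :
    (conflictGraph M r).chromaticNumber ≤ Fintype.card {t : α' // f t = r} :=
  (hs.conflictGraphColoring hc r).colorable.chromaticNumber_le

theorem comp_equiv (hs : IsRowSplit M M' f) {γ : Type*} (e : γ ≃ α') :
    IsRowSplit M (M' ∘ e) (f ∘ e) := fun i j =>
  (hs i j).trans ⟨fun ⟨t, ht⟩ => ⟨e.symm t, by simpa using ht⟩, fun ⟨u, hu⟩ => ⟨e u, hu⟩⟩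

end IsRowSplit

theorem ConflictFree.comp {γ : Type*} (hc : ConflictFree M') (g : γ → α') :
    ConflictFree (M' ∘ g) := fun i j ⟨r, r', r'', h⟩ => hc i j ⟨g r, g r', g r'', h⟩

def entrySplit [DecidableEq β] (M : α → β → Bool) : α × β → β → Bool :=
  fun p c => M p.1 p.2 && decide (p.2 = c)

theorem isRowSplit_entrySplit [DecidableEq β] (M : α → β → Bool) :
    IsRowSplit M (entrySplit M) Prod.fst := by
  intro i j
  constructor
  · intro h
    exact ⟨(i, j), rfl, by simp [entrySplit, h]⟩
  · rintro ⟨⟨i', j'⟩, rfl, h⟩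
    simp only [entrySplit, Bool.and_eq_true, decide_eq_true_eq] at h
    exact h.2 ▸ h.1

theorem conflictFree_entrySplit [DecidableEq β] (M : α → β → Bool) :
    ConflictFree (entrySplit M) := by
  intro i j hij
  have hne := hij.ne
  obtain ⟨r, -, -, hi, hj, -⟩ := hij
  simp only [entrySplit, Bool.and_eq_true, decide_eq_true_eq] at hi hj
  exact hne (hi.2.symm.trans hj.2)

theorem exists_conflictFree_rowSplit_gammaBar [Fintype α] [Fintype β] (M : α → β → Bool) :
    ∃ (M' : Fin (gammaBar M) → β → Bool) (f : Fin (gammaBar M) → α),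
      IsRowSplit M M' f ∧ ConflictFree M' := by
  classical
  refine Nat.sInf_mem (s := {k | ∃ (M' : Fin k → β → Bool) (f : Fin k → α),
    IsRowSplit M M' f ∧ ConflictFree M'}) ?_
  let e := (Fintype.equivFin (α × β)).symm
  exact ⟨_, entrySplit M ∘ e, Prod.fst ∘ e, (isRowSplit_entrySplit M).comp_equiv e,
    (conflictFree_entrySplit M).comp e⟩

theorem sum_card_fiber {ι κ : Type*} [Fintype ι] [Fintype κ] [DecidableEq κ] (f : ι → κ) :
    ∑ r : κ, Fintype.card {t : ι // f t = r} = Fintype.card ι :=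
  Fintype.card_sigma.symm.trans (Fintype.card_congr (Equiv.sigmaFiberEquiv f))

/-- Corollary 1: `γ̄(M) ≥ Σ_r χ(G_{M,r})`. -/
theorem stmt_1 {m n : ℕ} (M : Fin m → Fin n → Bool) :
    ∑ r : Fin m, (conflictGraph M r).chromaticNumber ≤ (gammaBar M : ℕ∞) := by
  obtain ⟨M', f, hs, hc⟩ := exists_conflictFree_rowSplit_gammaBar M
  calc ∑ r : Fin m, (conflictGraph M r).chromaticNumber
      ≤ ∑ r : Fin m, (Fintype.card {t // f t = r} : ℕ∞) :=
        Finset.sum_le_sum fun r _ => hs.chromaticNumber_conflictGraph_le hc r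
    _ = gammaBar M := by rw [← Nat.cast_sum, sum_card_fiber, Fintype.card_fin]

end MPP
end

section
/- For every binary matrix M and every row r of M, the complement of the conflict graph G_{M,r} is transitively orientable. -/
/-! Two columns sharing a `1` in row `r` are in conflict exactly when neither contains the
other, so the complement of `G_{M,r}` is the comparability graph of containment of column
supports. Ordering columns lexicographically by (support, index) breaks the ties between equal
columns and yields a strict order whose comparability graph is that complement; orienting each
edge upwards in this order is transitive. -/

theorem Prod.Lex.toLex_lt_or_gt_iff_of_ne {A B : Type*} [PartialOrder A] [LinearOrder B]
    {x₁ x₂ : A} {y₁ y₂ : B} (hy : y₁ ≠ y₂) :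
    toLex (x₁, y₁) < toLex (x₂, y₂) ∨ toLex (x₂, y₂) < toLex (x₁, y₁) ↔ x₁ ≤ x₂ ∨ x₂ ≤ x₁ := by
  simp only [Prod.Lex.toLex_lt_toLex']
  refine ⟨Or.imp And.left And.left, ?_⟩
  by_cases hx : x₁ = x₂
  · subst hx
    exact fun _ => hy.lt_or_gt.imp (fun h => ⟨le_rfl, fun _ => h⟩) (fun h => ⟨le_rfl, fun _ => h⟩)
  · exact Or.imp (fun h => ⟨h, fun e => absurd e hx⟩) (fun h => ⟨h, fun e => absurd e.symm hx⟩)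

namespace MPP

variable {α β : Type*}

theorem transitivelyOrientable_of_adj_iff_lt_or_gt {V P : Type*} [Preorder P]
    (G : SimpleGraph V) (f : V → P) (hG : ∀ u v, G.Adj u v ↔ f u < f v ∨ f v < f u) :
    TransitivelyOrientable G :=
  ⟨fun u v => f u < f v,
    fun u v h => (hG u v).2 (Or.inl h),
    fun u v huv => ⟨fun h => lt_asymm h, fun h => ((hG u v).1 huv).resolve_right h⟩,
    fun _ _ _ => lt_trans⟩

def columnSupport (M : α → β → Bool) (j : β) : Set α := {k | M k j = true}

theorem contained_iff_columnSupport_subset {M : α → β → Bool} {i j : β} :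
    Contained M i j ↔ columnSupport M i ⊆ columnSupport M j :=
  Iff.rfl

theorem Contained.not_inConflict {M : α → β → Bool} {i j : β} (h : Contained M i j) :
    ¬ InConflict M i j := by
  rintro ⟨-, -, r, -, -, -, -, hi, hj⟩
  simp [h r hi] at hj

theorem inConflict_iff_of_common_row {M : α → β → Bool} {i j : β} {r : α}
    (hi : M r i = true) (hj : M r j = true) :
    InConflict M i j ↔ ¬ Contained M i j ∧ ¬ Contained M j i := by
  refine ⟨fun h => ⟨fun hij => hij.not_inConflict h, fun hji => hji.not_inConflict h.symm⟩, ?_⟩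
  rintro ⟨hij, hji⟩
  simp only [Contained, not_forall, Bool.not_eq_true, exists_prop] at hij hji
  obtain ⟨r'', hi'', hj''⟩ := hij
  obtain ⟨r', hj', hi'⟩ := hji
  exact ⟨r, r', r'', hi, hj, hi', hj', hi'', hj''⟩

/-- For every binary matrix `M` and row `r`, the complement of the conflict graph
`G_{M,r}` is transitively orientable. -/
theorem stmt_3 {m n : ℕ} (M : Fin m → Fin n → Bool) (r : Fin m) :
    TransitivelyOrientable (conflictGraph M r)ᶜ := by
  refine transitivelyOrientable_of_adj_iff_lt_or_gt _
    (fun a => toLex (columnSupport M a.1, a.1)) fun a b => ?_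
  by_cases hab : a = b
  · subst hab
    simp
  · rw [Prod.Lex.toLex_lt_or_gt_iff_of_ne (Subtype.coe_ne_coe.2 hab)]
    change a ≠ b ∧ ¬ InConflict M a.1 b.1 ↔ _
    rw [inConflict_iff_of_common_row a.2 b.2]
    simp only [contained_iff_columnSupport_subset]
    tauto

end MPP
end

section
/- Let M be a binary matrix with pairwise distinct columns and let r be a row of M. Then any two distinct sources of the directed containment graph H⃗_{M,r} correspond to columns of M that are in conflict; consequently the sources of H⃗_{M,r} form a clique in the conflict graph G_{M,r}, and σ(M,r) ≤ ω(G_{M,r}), the clique number of G_{M,r}. -/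
/-! Two distinct sources of `H⃗_{M,r}` do not contain one another, so each has a row where it is `1`
and the other `0`; together with row `r`, where both are `1`, this is a conflict. Hence the
sources form a clique of `G_{M,r}`, whose size is at most `ω(G_{M,r})`. -/

namespace SimpleGraph

theorem IsClique.ncard_le_cliqueNum {V : Type*} [Finite V] {G : SimpleGraph V} {s : Set V}
    (h : G.IsClique s) : s.ncard ≤ G.cliqueNum := by
  obtain ⟨t, rfl⟩ := s.toFinite.exists_finset_coe
  rw [Set.ncard_coe_finset]
  exact h.card_le_cliqueNum

end SimpleGraph

namespace MPP

variable {α β : Type*} {M : α → β → Bool}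

theorem inConflict_of_not_contained {r : α} {i j : β} (hi : M r i = true) (hj : M r j = true)
    (hij : ¬ Contained M i j) (hji : ¬ Contained M j i) : InConflict M i j := by
  simp only [Contained, not_forall, Bool.not_eq_true] at hij hji
  obtain ⟨r'', hi'', hj''⟩ := hij
  obtain ⟨r', hj', hi'⟩ := hji
  exact ⟨r, r', r'', hi, hj, hi', hj', hi'', hj''⟩

theorem IsSourceCol.inConflict {r : α} {a b : {c : β // M r c = true}}
    (ha : IsSourceCol M r a) (hb : IsSourceCol M r b) (hab : a ≠ b) : InConflict M a.1 b.1 :=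
  inConflict_of_not_contained a.2 b.2 (hb a hab) (ha b hab.symm)

theorem isClique_setOf_isSourceCol (r : α) :
    (conflictGraph M r).IsClique {a | IsSourceCol M r a} :=
  fun _ ha _ hb hab => ha.inConflict hb hab

theorem sigmaMr_le_cliqueNum [Finite β] (r : α) : sigmaMr M r ≤ (conflictGraph M r).cliqueNum :=
  (isClique_setOf_isSourceCol r).ncard_le_cliqueNum

theorem stmt_7_general {m n : ℕ} (M : Fin m → Fin n → Bool) (r : Fin m) :
    (∀ a b : {c : Fin n // M r c = true}, IsSourceCol M r a → IsSourceCol M r b → a ≠ b →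
      InConflict M a.1 b.1) ∧
    (conflictGraph M r).IsClique {a : {c : Fin n // M r c = true} | IsSourceCol M r a} ∧
    sigmaMr M r ≤ (conflictGraph M r).cliqueNum :=
  ⟨fun _ _ ha hb hab => ha.inConflict hb hab, isClique_setOf_isSourceCol r,
    sigmaMr_le_cliqueNum r⟩

/-- If `M` has pairwise distinct columns, then any two distinct sources of `H⃗_{M,r}` are in
conflict; hence the sources form a clique in `G_{M,r}` and `σ(M,r) ≤ ω(G_{M,r})`. -/
theorem stmt_7 {m n : ℕ} (M : Fin m → Fin n → Bool)
    (hinj : Function.Injective fun j : Fin n => fun k : Fin m => M k j) (r : Fin m) :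
    (∀ a b : {c : Fin n // M r c = true}, IsSourceCol M r a → IsSourceCol M r b → a ≠ b →
      InConflict M a.1 b.1) ∧
    (conflictGraph M r).IsClique {a : {c : Fin n // M r c = true} | IsSourceCol M r a} ∧
    sigmaMr M r ≤ (conflictGraph M r).cliqueNum :=
  stmt_7_general M r

end MPP
end

section
/- Let M be an m×n binary matrix with pairwise distinct columns such that no column of M is contained in both columns of a pair of conflicting columns. Define a binary matrix M' with n columns as follows: for each row r of M, with c_{r,1},…,c_{r,σ(M,r)} the sources of the directed containment graph H⃗_{M,r}, add σ(M,r) rows r'_1,…,r'_{σ(M,r)} to M', where M'_{r'_k, j} = 1 if and only if M_{r,j} = 1 and column c_{r,k} of M is contained in column j of M. Then M' is a conflict-free row split of M with Σ_r σ(M,r) rows. -/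
namespace MPP

/-- The matrix `M'` produced by the algorithm: for each row `r` of `M` and each source `c` of
the directed containment graph `H⃗_{M,r}`, there is a row whose entry in column `j` is `1` iff
`M_{r,j} = 1` and column `c` is contained in column `j`. -/
def algMatrix {m n : ℕ} (M : Fin m → Fin n → Bool) :
    (Σ r : Fin m, {j : {c : Fin n // M r c = true} // IsSourceCol M r j}) → Fin n → Bool :=
  fun p j => M p.1 j && decide (Contained M p.2.1.1 j)

/-! If a row of `M'` built from the source `c` of `H⃗_{M,r}` had a `1` in two columns `i`, `j`
in conflict in `M'`, then `c` would be contained in both `i` and `j`, so by hypothesis `i` and `j`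
are not in conflict in `M`; sharing the `1` in row `r`, one of them is then contained in the other,
and this containment survives in `M'`, which is incompatible with a conflict. The row split
property holds because, as the columns are distinct and the rows finite, strict containment is
well founded, so every column with a `1` in row `r` contains a source of `H⃗_{M,r}`. -/

section Containment

variable {α β : Type*} {M : α → β → Bool}

theorem Contained.trans {i j k : β} (hij : Contained M i j) (hjk : Contained M j k) :
    Contained M i k :=
  fun r hr => hjk r (hij r hr)

theorem InConflict.not_contained {i j : β} (h : InConflict M i j) : ¬ Contained M i j := by
  obtain ⟨_, _, r'', _, _, _, _, hi, hj⟩ := h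
  intro hij
  simp [hij r'' hi] at hj

theorem contained_or_contained_of_not_inConflict {i j : β} {r : α} (hi : M r i = true)
    (hj : M r j = true) (h : ¬ InConflict M i j) : Contained M i j ∨ Contained M j i := by
  by_contra! hboth
  obtain ⟨hij, hji⟩ := hboth
  simp only [Contained, not_forall, exists_prop] at hij hji
  obtain ⟨k₁, hk₁i, hk₁j⟩ := hij
  obtain ⟨k₂, hk₂j, hk₂i⟩ := hji
  exact h ⟨r, k₂, k₁, hi, hj, by simpa using hk₂i, hk₂j, hk₁i, by simpa using hk₁j⟩

theorem support_ssubset_of_contained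
    (hinj : Function.Injective fun j : β => fun k : α => M k j) {i j : β}
    (hij : Contained M i j) (hne : i ≠ j) : {k | M k i = true} ⊂ {k | M k j = true} := by
  refine ⟨hij, fun hji => hne (hinj (funext fun k => ?_))⟩
  exact Bool.eq_iff_iff.mpr ⟨hij k, fun hk => hji hk⟩

theorem exists_isSourceCol_contained [Finite α]
    (hinj : Function.Injective fun j : β => fun k : α => M k j) {r : α} {j : β}
    (hj : M r j = true) :
    ∃ c : {c : β // M r c = true}, IsSourceCol M r c ∧ Contained M c.1 j := by
  obtain ⟨c, ⟨hc, hcj⟩, hmin⟩ :=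
    (InvImage.wf (fun c : β => {k | M k c = true}) wellFounded_lt).has_min
      {c | M r c = true ∧ Contained M c j} ⟨j, hj, fun _ => id⟩
  refine ⟨⟨c, hc⟩, fun i hne hic => ?_, hcj⟩
  exact hmin i.1 ⟨i.2, hic.trans hcj⟩
    (support_ssubset_of_contained hinj hic fun h => hne (Subtype.ext h))

end Containment

section Algorithm

variable {m n : ℕ} {M : Fin m → Fin n → Bool}

theorem Contained.algMatrix {i j : Fin n} (hij : Contained M i j) :
    Contained (algMatrix M) i j := by
  intro p hp
  simp only [MPP.algMatrix, Bool.and_eq_true, decide_eq_true_eq] at hp ⊢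
  exact ⟨hij _ hp.1, hp.2.trans hij⟩

theorem conflictFree_algMatrix
    (hnc : ∀ c i j : Fin n, InConflict M i j → ¬ (Contained M c i ∧ Contained M c j)) :
    ConflictFree (algMatrix M) := by
  intro i j hconf
  have ⟨p, _, _, hpi, hpj, _⟩ := hconf
  simp only [MPP.algMatrix, Bool.and_eq_true, decide_eq_true_eq] at hpi hpj
  have hM : ¬ InConflict M i j := fun h => hnc _ i j h ⟨hpi.2, hpj.2⟩
  rcases contained_or_contained_of_not_inConflict hpi.1 hpj.1 hM with hij | hji
  · exact hconf.not_contained hij.algMatrix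
  · exact hconf.symm.not_contained hji.algMatrix

theorem isRowSplit_algMatrix (hinj : Function.Injective fun j : Fin n => fun k : Fin m => M k j) :
    IsRowSplit M (algMatrix M) (fun p => p.1) := by
  intro r j
  constructor
  · intro hj
    obtain ⟨c, hsrc, hcj⟩ := exists_isSourceCol_contained hinj hj
    exact ⟨⟨r, c, hsrc⟩, rfl, by simp [MPP.algMatrix, hj, hcj]⟩
  · rintro ⟨p, rfl, hp⟩
    simp only [MPP.algMatrix, Bool.and_eq_true] at hp
    exact hp.1

end Algorithm

/-- If `M` has pairwise distinct columns and no column of `M` is contained in both columns of a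
pair of conflicting columns, then the algorithm's matrix is a conflict-free row split of `M`
with `Σ_r σ(M,r)` rows. -/
theorem stmt_9 {m n : ℕ} (M : Fin m → Fin n → Bool)
    (hinj : Function.Injective fun j : Fin n => fun k : Fin m => M k j)
    (hnc : ∀ c i j : Fin n, InConflict M i j → ¬ (Contained M c i ∧ Contained M c j)) :
    ConflictFree (algMatrix M) ∧
    IsRowSplit M (algMatrix M) (fun p => p.1) ∧
    Nat.card (Σ r : Fin m, {j : {c : Fin n // M r c = true} // IsSourceCol M r j}) =
      ∑ r : Fin m, sigmaMr M r :=
  ⟨conflictFree_algMatrix hnc, isRowSplit_algMatrix hinj, Nat.card_sigma⟩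

end MPP
end

section
/- Let M be an m×n binary matrix with no all-zero row such that for any two distinct columns i and j of M, column i is not contained in column j. Then γ̄(M) equals the total number of 1-entries of M. -/
/-! In a conflict-free matrix, two columns with a common `1` are nested: otherwise the common
row and the two rows separating them form a conflict. Nesting of columns passes from a row split
to the split matrix, so if no two columns of `M` are nested, every row of a conflict-free row split
of `M` carries at most one `1`. Each `1`-entry of `M` then needs its own row, and splitting every
row of `M` into its `1`-entries gives a conflict-free row split with exactly that many rows. -/

namespace MPP

variable {α α' α'' β : Type*}

theorem ConflictFree.contained_or_contained {M : α → β → Bool} (hM : ConflictFree M) {r : α}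
    {a b : β} (ha : M r a = true) (hb : M r b = true) : Contained M a b ∨ Contained M b a := by
  by_contra! h
  simp only [Contained, not_forall, Bool.not_eq_true] at h
  obtain ⟨⟨r'', hr''a, hr''b⟩, ⟨r', hr'b, hr'a⟩⟩ := h
  exact hM a b ⟨r, r', r'', ha, hb, hr'a, hr'b, hr''a, hr''b⟩

theorem conflictFree_of_row_subsingleton {M : α → β → Bool}
    (h : ∀ r a b, M r a = true → M r b = true → a = b) : ConflictFree M :=
  fun i j hij => hij.ne <| by
    obtain ⟨r, -, -, hi, hj, -⟩ := hij
    exact h r i j hi hj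

theorem ConflictFree.comp_s10 {M : α → β → Bool} (hM : ConflictFree M) (g : α' → α) :
    ConflictFree (M ∘ g) :=
  fun i j ⟨r, r', r'', hij⟩ => hM i j ⟨g r, g r', g r'', hij⟩

namespace IsRowSplit

variable {M : α → β → Bool} {M' : α' → β → Bool} {f : α' → α}

theorem comp_surjective (hs : IsRowSplit M M' f) {g : α'' → α'} (hg : g.Surjective) :
    IsRowSplit M (M' ∘ g) (f ∘ g) := by
  intro i j
  rw [hs i j]
  constructor
  · rintro ⟨k, hk, hkj⟩
    obtain ⟨k'', rfl⟩ := hg k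
    exact ⟨k'', hk, hkj⟩
  · rintro ⟨k'', hk, hkj⟩
    exact ⟨g k'', hk, hkj⟩

theorem contained (hs : IsRowSplit M M' f) {a b : β} (h : Contained M' a b) : Contained M a b := by
  intro i hi
  obtain ⟨k, hk, hka⟩ := (hs i a).1 hi
  exact (hs i b).2 ⟨k, hk, h k hka⟩

theorem eq_of_conflictFree (hs : IsRowSplit M M' f) (hcf : ConflictFree M')
    (hnc : ∀ i j : β, i ≠ j → ¬ Contained M i j) {k : α'} {a b : β}
    (ha : M' k a = true) (hb : M' k b = true) : a = b := by
  by_contra hab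
  rcases hcf.contained_or_contained ha hb with h | h
  · exact hnc a b hab (hs.contained h)
  · exact hnc b a (Ne.symm hab) (hs.contained h)

theorem card_ones_le [Fintype α] [Fintype β] [Fintype α'] (hs : IsRowSplit M M' f)
    (hrow : ∀ k a b, M' k a = true → M' k b = true → a = b) :
    Fintype.card (Σ r, {j // M r j = true}) ≤ Fintype.card α' := by
  choose g hgf hgM using fun p : Σ r, {j // M r j = true} => (hs p.1 p.2.1).1 p.2.2
  refine Fintype.card_le_of_injective g fun p q hpq => Sigma.subtype_ext ?_ ?_
  · rw [← hgf p, ← hgf q, hpq]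
  · exact hrow (g p) _ _ (hgM p) (hpq ▸ hgM q)

end IsRowSplit

def singletonSplit [DecidableEq β] (M : α → β → Bool) : (Σ r, {j // M r j = true}) → β → Bool :=
  fun p j => decide (j = p.2.1)

theorem isRowSplit_singletonSplit [DecidableEq β] (M : α → β → Bool) :
    IsRowSplit M (singletonSplit M) Sigma.fst := by
  intro i j
  constructor
  · exact fun h => ⟨⟨i, j, h⟩, rfl, by simp [singletonSplit]⟩
  · rintro ⟨⟨r, c, hc⟩, rfl, hj⟩
    obtain rfl : j = c := by simpa [singletonSplit] using hj
    exact hc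

theorem conflictFree_singletonSplit [DecidableEq β] (M : α → β → Bool) :
    ConflictFree (singletonSplit M) :=
  conflictFree_of_row_subsingleton fun p a b ha hb => by
    simp only [singletonSplit, decide_eq_true_eq] at ha hb
    rw [ha, hb]

theorem gammaBar_eq_card_ones [Fintype α] [Fintype β] {M : α → β → Bool}
    (hnc : ∀ i j : β, i ≠ j → ¬ Contained M i j) :
    gammaBar M = Fintype.card (Σ r, {j // M r j = true}) := by
  classical
  let e := Fintype.equivFin (Σ r, {j // M r j = true})
  have hmem : Fintype.card (Σ r, {j // M r j = true}) ∈ {k : ℕ | ∃ (M' : Fin k → β → Bool)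
      (f : Fin k → α), IsRowSplit M M' f ∧ ConflictFree M'} :=
    ⟨_, _, (isRowSplit_singletonSplit M).comp_surjective e.symm.surjective,
      (conflictFree_singletonSplit M).comp_s10 e.symm⟩
  refine le_antisymm (Nat.sInf_le hmem) (le_csInf ⟨_, hmem⟩ ?_)
  rintro k ⟨M', f, hs, hcf⟩
  simpa using hs.card_ones_le fun _ _ _ => hs.eq_of_conflictFree hcf hnc

theorem stmt_10_general {m n : ℕ} (M : Fin m → Fin n → Bool)
    (hnc : ∀ i j : Fin n, i ≠ j → ¬ Contained M i j) :
    gammaBar M = ∑ r : Fin m, (Finset.univ.filter fun j : Fin n => M r j = true).card := by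
  rw [gammaBar_eq_card_ones hnc, Fintype.card_sigma]
  simp only [Fintype.card_subtype]

/-- Corollary 2: if `M` has no all-zero row and no column of `M` is contained in another one,
then `γ̄(M)` equals the total number of `1`-entries of `M`. -/
theorem stmt_10 {m n : ℕ} (M : Fin m → Fin n → Bool)
    (hrow : ∀ r : Fin m, ∃ j, M r j = true)
    (hnc : ∀ i j : Fin n, i ≠ j → ¬ Contained M i j) :
    gammaBar M = ∑ r : Fin m, (Finset.univ.filter fun j : Fin n => M r j = true).card :=
  stmt_10_general M hnc

end MPP
end

section
/- Let G = (V,E) be a simple cubic graph and let M = M(G) be the (|V|+3)×(|E|+3) binary matrix associated with G. Then for every row indexed by a vertex v ∈ V, the conflict graph G_{M,v} is isomorphic to the disjoint union of two complete graphs on three vertices, so χ(G_{M,v}) = 3; for every row indexed by r ∈ {r_1,r_2,r_3}, G_{M,r} consists of a single vertex, so χ(G_{M,r}) = 1. Consequently Σ_r χ(G_{M,r}) = 3|V|+3. -/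
namespace MPP

/-- A set of edges is a matching if its elements are pairwise disjoint. -/
def IsMatchingSet {V : Type*} (s : Set (Sym2 V)) : Prop :=
  ∀ e ∈ s, ∀ f ∈ s, e ≠ f → ∀ v : V, ¬ (v ∈ e ∧ v ∈ f)

/-- A graph is 3-edge-colorable if its edge set can be partitioned into three matchings. -/
def ThreeEdgeColorable {V : Type*} (G : SimpleGraph V) : Prop :=
  ∃ E₁ E₂ E₃ : Set (Sym2 V), E₁ ∪ E₂ ∪ E₃ = G.edgeSet ∧
    Disjoint E₁ E₂ ∧ Disjoint E₁ E₃ ∧ Disjoint E₂ E₃ ∧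
    IsMatchingSet E₁ ∧ IsMatchingSet E₂ ∧ IsMatchingSet E₃

/-- The `(|V|+3) × (|E|+3)` binary matrix `M(G)` associated with a graph `G`, with rows indexed
by `V ∪ {r₁,r₂,r₃}` and columns indexed by `E ∪ {c₁,c₂,c₃}`. -/
def Mcubic {V : Type*} [DecidableEq V] (G : SimpleGraph V) :
    (V ⊕ Fin 3) → (↥G.edgeSet ⊕ Fin 3) → Bool
  | Sum.inl v, Sum.inl e => decide (v ∈ (e : Sym2 V))
  | Sum.inl _, Sum.inr _ => true
  | Sum.inr _, Sum.inl _ => false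
  | Sum.inr i, Sum.inr j => decide (i = j)

end MPP

/-! In row `v` of `M(G)` the ones sit in the columns of the edges at `v` and in `c₁, c₂, c₃`.
Two edges at `v` conflict through their other endpoints, two of the `cⱼ` conflict through the
rows `rⱼ`, and an edge column never conflicts with a `cⱼ` because it is contained in it. So
`G_{M,v}` is a clique on the edges at `v` beside a triangle on `c₁, c₂, c₃`, two triangles when `G`
is cubic. Row `rᵢ` has a single one. -/

namespace MPP

open SimpleGraph

namespace Mcubic

variable {V : Type*} [DecidableEq V] {G : SimpleGraph V}

theorem inConflict_inl_inl {e f : G.edgeSet} {v : V} (he : v ∈ (e : Sym2 V))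
    (hf : v ∈ (f : Sym2 V)) (hef : e ≠ f) :
    InConflict (Mcubic G) (Sum.inl e : ↥G.edgeSet ⊕ Fin 3) (Sum.inl f) := by
  have hef' : (e : Sym2 V) ≠ f := Subtype.coe_injective.ne hef
  set a := Sym2.Mem.other he
  set b := Sym2.Mem.other hf
  have hae : a ∈ (e : Sym2 V) := Sym2.other_mem he
  have hbf : b ∈ (f : Sym2 V) := Sym2.other_mem hf
  have hav : a ≠ v := Sym2.other_ne (G.not_isDiag_of_mem_edgeSet e.2) he
  have hbv : b ≠ v := Sym2.other_ne (G.not_isDiag_of_mem_edgeSet f.2) hf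
  have haf : a ∉ (f : Sym2 V) := fun haf => hef' (Sym2.eq_of_ne_mem hav hae he haf hf)
  have hbe : b ∉ (e : Sym2 V) := fun hbe => hef' (Sym2.eq_of_ne_mem hbv hbe he hbf hf)
  refine ⟨Sum.inl v, Sum.inl b, Sum.inl a, ?_, ?_, ?_, ?_, ?_, ?_⟩ <;>
    simp [Mcubic, he, hf, hae, hbf, haf, hbe]

theorem inConflict_inr_inr (v : V) {i j : Fin 3} (hij : i ≠ j) :
    InConflict (Mcubic G) (Sum.inr i : ↥G.edgeSet ⊕ Fin 3) (Sum.inr j) := by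
  refine ⟨Sum.inl v, Sum.inr j, Sum.inr i, ?_, ?_, ?_, ?_, ?_, ?_⟩ <;>
    simp [Mcubic, hij, hij.symm]

theorem not_inConflict_inl_inr (e : G.edgeSet) (j : Fin 3) :
    ¬ InConflict (Mcubic G) (Sum.inl e : ↥G.edgeSet ⊕ Fin 3) (Sum.inr j) := by
  rintro ⟨r, r', r'' | i, -, -, -, -, h, h'⟩ <;> simp [Mcubic] at h h'

variable (G)

def inlRowSupportEquiv (v : V) :
    {c : ↥G.edgeSet ⊕ Fin 3 // Mcubic G (Sum.inl v) c = true} ≃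
      G.incidenceSet v ⊕ Fin 3 where
  toFun
    | ⟨Sum.inl e, h⟩ => Sum.inl ⟨e, e.2, by simpa [Mcubic] using h⟩
    | ⟨Sum.inr j, _⟩ => Sum.inr j
  invFun := Sum.elim (fun e => ⟨Sum.inl ⟨e, e.2.1⟩, by simp [Mcubic, e.2.2]⟩)
    (fun j => ⟨Sum.inr j, rfl⟩)
  left_inv := by rintro ⟨e | j, h⟩ <;> rfl
  right_inv := by rintro (e | j) <;> rfl

def conflictGraphInlIso (v : V) :
    conflictGraph (Mcubic G) (Sum.inl v) ≃g
      completeGraph (G.incidenceSet v) ⊕g completeGraph (Fin 3) where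
  toEquiv := inlRowSupportEquiv G v
  map_rel_iff' := by
    rintro ⟨e | i, he⟩ ⟨f | j, hf⟩
    · have hev : v ∈ (e : Sym2 V) := by simpa [Mcubic] using he
      have hfv : v ∈ (f : Sym2 V) := by simpa [Mcubic] using hf
      refine Iff.trans ?_
        ⟨inConflict_inl_inl hev hfv, fun h hef => h.ne (by subst hef; rfl)⟩
      simp [inlRowSupportEquiv, Subtype.ext_iff]
    · exact iff_of_false nofun (not_inConflict_inl_inr e j)
    · exact iff_of_false nofun fun h => not_inConflict_inl_inr f i h.symm
    · change i ≠ j ↔ _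
      exact ⟨inConflict_inr_inr v, fun h hij => h.ne (by subst hij; rfl)⟩

instance (i : Fin 3) : Unique {c : ↥G.edgeSet ⊕ Fin 3 // Mcubic G (Sum.inr i) c = true} where
  default := ⟨Sum.inr i, by simp [Mcubic]⟩
  uniq := by
    rintro ⟨e | j, h⟩
    · simp [Mcubic] at h
    · obtain rfl : i = j := by simpa [Mcubic] using h
      rfl

end Mcubic

/-- For a simple cubic graph `G` and `M = M(G)`: for each vertex row `v`, the conflict graph
`G_{M,v}` is isomorphic to the disjoint union of two triangles and has chromatic number 3; for
each row `rᵢ`, the conflict graph has a single vertex and chromatic number 1; consequently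
`Σ_r χ(G_{M,r}) = 3|V|+3`. -/
theorem stmt_13 {V : Type*} [Fintype V] [DecidableEq V] (G : SimpleGraph V)
    [DecidableRel G.Adj] (hcubic : ∀ v : V, G.degree v = 3) :
    (∀ v : V, Nonempty (conflictGraph (Mcubic G) (Sum.inl v) ≃g
        (SimpleGraph.completeGraph (Fin 3) ⊕g SimpleGraph.completeGraph (Fin 3))) ∧
      (conflictGraph (Mcubic G) (Sum.inl v)).chromaticNumber = 3) ∧
    (∀ i : Fin 3,
      Nat.card {c : ↥G.edgeSet ⊕ Fin 3 // Mcubic G (Sum.inr i) c = true} = 1 ∧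
      (conflictGraph (Mcubic G) (Sum.inr i)).chromaticNumber = 1) ∧
    ∑ r : V ⊕ Fin 3, (conflictGraph (Mcubic G) r).chromaticNumber =
      (3 * Fintype.card V + 3 : ℕ∞) := by
  have hiso (v : V) : conflictGraph (Mcubic G) (Sum.inl v) ≃g
      completeGraph (Fin 3) ⊕g completeGraph (Fin 3) := by
    have hcard : Fintype.card (G.incidenceSet v) = Fintype.card (Fin 3) := by
      rw [card_incidenceSet_eq_degree, hcubic, Fintype.card_fin]
    exact (Mcubic.conflictGraphInlIso G v).trans
      ((Iso.completeGraph (Fintype.equivOfCardEq hcard)).sumCongr Iso.refl)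
  have hχv (v : V) : (conflictGraph (Mcubic G) (Sum.inl v)).chromaticNumber = 3 := by
    simp [chromaticNumber_congr (hiso v)]
  have hχr (i : Fin 3) : (conflictGraph (Mcubic G) (Sum.inr i)).chromaticNumber = 1 :=
    chromaticNumber_eq_one_iff.mpr ⟨Subsingleton.elim _ _, inferInstance⟩
  refine ⟨fun v => ⟨⟨hiso v⟩, hχv v⟩, fun i => ⟨Nat.card_unique, hχr i⟩, ?_⟩
  simp only [Fintype.sum_sum_type, hχv, hχr, Finset.sum_const, Finset.card_univ,
    Fintype.card_fin, nsmul_eq_mul, mul_one]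
  push_cast
  ring

end MPP
end

section
/- Every conflict-free binary matrix with n ≥ 1 columns has at most 2n pairwise distinct rows. -/
/-! In a conflict-free matrix, any two columns with a `1` in a common row are comparable under
containment, so every nonzero row has a column that is contained in all the columns where the
row has a `1`. That minimal column determines the row: a row with a `1` in it has a `1` in every
column containing it. Hence distinct nonzero rows have distinct minimal columns, and together
with the zero row there are at most `n + 1 ≤ 2n` distinct rows. -/

namespace MPP

variable {α β : Type*} {M : α → β → Bool}

def IsMinColumn (M : α → β → Bool) (v : β → Bool) (j : β) : Prop :=
  v j = true ∧ ∀ k, v k = true → Contained M j k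

theorem ConflictFree.contained_or_contained_s17 (hM : ConflictFree M) {r : α} {j k : β}
    (hj : M r j = true) (hk : M r k = true) : Contained M j k ∨ Contained M k j := by
  by_contra! h
  simp only [Contained, not_forall, Bool.not_eq_true, exists_prop] at h
  obtain ⟨⟨r'', hj'', hk''⟩, ⟨r', hk', hj'⟩⟩ := h
  exact hM j k ⟨r, r', r'', hj, hk, hj', hk', hj'', hk''⟩

theorem ConflictFree.exists_isMinColumn [Finite β] (hM : ConflictFree M) {r : α} {j₀ : β}
    (hj₀ : M r j₀ = true) : ∃ j, IsMinColumn M (M r) j := by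
  obtain ⟨j, hj, hmin⟩ := Set.Finite.exists_minimalFor (fun j => {a | M a j = true})
    {j | M r j = true} (Set.toFinite _) ⟨j₀, hj₀⟩
  refine ⟨j, hj, fun k hk => ?_⟩
  rcases hM.contained_or_contained_s17 hj hk with hjk | hkj
  · exact hjk
  · exact hmin hk hkj

theorem ConflictFree.row_eq_false_or_exists_isMinColumn [Finite β] (hM : ConflictFree M)
    (r : α) : M r = (fun _ => false) ∨ ∃ j, IsMinColumn M (M r) j := by
  by_cases h : ∃ j₀, M r j₀ = true
  · exact Or.inr (hM.exists_isMinColumn h.choose_spec)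
  · simp only [not_exists, Bool.not_eq_true] at h
    exact Or.inl (funext h)

theorem IsMinColumn.row_eq {r r' : α} {j : β} (h : IsMinColumn M (M r) j)
    (h' : IsMinColumn M (M r') j) : M r = M r' :=
  funext fun k => Bool.eq_iff_iff.2
    ⟨fun hk => h.2 k hk r' h'.1, fun hk => h'.2 k hk r h.1⟩

theorem ConflictFree.card_range_le [Finite β] (hM : ConflictFree M) :
    Nat.card (Set.range M) ≤ Nat.card β + 1 := by
  classical
  let minColumn : Set.range M → Option β := fun v =>
    if h : ∃ j, IsMinColumn M v.1 j then some h.choose else none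
  have hinj : Function.Injective minColumn := by
    rintro ⟨_, r, rfl⟩ ⟨_, r', rfl⟩ hrr'
    simp only [minColumn] at hrr'
    apply Subtype.ext
    split_ifs at hrr' with h h' h'
    · rw [Option.some_inj] at hrr'
      exact h.choose_spec.row_eq (hrr' ▸ h'.choose_spec)
    · exact ((hM.row_eq_false_or_exists_isMinColumn r).resolve_right h).trans
        ((hM.row_eq_false_or_exists_isMinColumn r').resolve_right h').symm
  calc Nat.card (Set.range M) ≤ Nat.card (Option β) := Nat.card_le_card_of_injective _ hinj
    _ = Nat.card β + 1 := Finite.card_option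

/-- Every conflict-free binary matrix with `n ≥ 1` columns has at most `2n` pairwise
distinct rows. -/
theorem stmt_17 {m n : ℕ} (hn : 1 ≤ n) (M : Fin m → Fin n → Bool)
    (hcf : ConflictFree M) :
    Nat.card (Set.range M) ≤ 2 * n := by
  have := hcf.card_range_le
  rw [Nat.card_fin] at this
  omega

end MPP
end

section
/- If G is a simple graph of minimum degree at least 2 and M ∈ {0,1}^{E(G)×V(G)} is the edge-vertex incidence matrix of G, then G is isomorphic to the conflict graph G_M of M. -/
/-! A row containing both `u` and `v` can only be the edge `uv`, so conflicting columns are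
adjacent. Conversely, for an edge `uv` the row `uv` has both, and since `v` has a second
neighbour `w ≠ u`, the row `vw` has `v` without `u` (and symmetrically). -/

namespace MPP

/-- The edge-vertex incidence matrix of a graph `G`: rows are edges, columns are vertices,
with `M_{e,v} = 1` iff `v` is an endpoint of `e`. -/
def incidenceMatrixEV {V : Type*} [DecidableEq V] (G : SimpleGraph V) :
    ↥G.edgeSet → V → Bool :=
  fun e v => decide (v ∈ (e : Sym2 V))

section

variable {V : Type*} [DecidableEq V] {G : SimpleGraph V}

@[simp]
theorem incidenceMatrixEV_eq_true_iff {e : G.edgeSet} {v : V} :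
    incidenceMatrixEV G e v = true ↔ v ∈ (e : Sym2 V) :=
  decide_eq_true_iff

@[simp]
theorem incidenceMatrixEV_eq_false_iff {e : G.edgeSet} {v : V} :
    incidenceMatrixEV G e v = false ↔ v ∉ (e : Sym2 V) :=
  decide_eq_false_iff_not

theorem adj_of_inConflict_incidenceMatrixEV {u v : V}
    (h : InConflict (incidenceMatrixEV G) u v) : G.Adj u v := by
  have huv := h.ne
  obtain ⟨e, -, -, hu, hv, -⟩ := h
  have he : (e : Sym2 V) = s(u, v) :=
    (Sym2.mem_and_mem_iff huv).mp ⟨incidenceMatrixEV_eq_true_iff.mp hu,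
      incidenceMatrixEV_eq_true_iff.mp hv⟩
  simpa [he] using e.2

theorem exists_incidenceMatrixEV_eq_true_eq_false [Fintype V] [DecidableRel G.Adj] {v : V}
    (hv : 1 < G.degree v) (u : V) (huv : u ≠ v) :
    ∃ e : G.edgeSet, incidenceMatrixEV G e v = true ∧ incidenceMatrixEV G e u = false := by
  obtain ⟨w, hw, hwu⟩ := Finset.exists_mem_ne (G.card_neighborFinset_eq_degree v ▸ hv) u
  rw [SimpleGraph.mem_neighborFinset] at hw
  refine ⟨⟨s(v, w), hw⟩, by simp, ?_⟩
  simp [huv, hwu.symm]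

theorem inConflict_incidenceMatrixEV_of_adj [Fintype V] [DecidableRel G.Adj] {u v : V}
    (hu : 1 < G.degree u) (hv : 1 < G.degree v) (huv : G.Adj u v) :
    InConflict (incidenceMatrixEV G) u v := by
  obtain ⟨e₁, he₁v, he₁u⟩ := exists_incidenceMatrixEV_eq_true_eq_false hv u huv.ne
  obtain ⟨e₂, he₂u, he₂v⟩ := exists_incidenceMatrixEV_eq_true_eq_false hu v huv.ne.symm
  exact ⟨⟨s(u, v), huv⟩, e₁, e₂, by simp, by simp, he₁u, he₁v, he₂u, he₂v⟩

end

/-- If `G` has minimum degree at least 2, then `G` is isomorphic to the conflict graph of its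
edge-vertex incidence matrix. -/
theorem stmt_19 {V : Type*} [Fintype V] [DecidableEq V] (G : SimpleGraph V)
    [DecidableRel G.Adj] (hdeg : ∀ v : V, 2 ≤ G.degree v) :
    Nonempty (G ≃g conflictGraphAll (incidenceMatrixEV G)) :=
  ⟨⟨Equiv.refl V, fun {u v} =>
    ⟨adj_of_inConflict_incidenceMatrixEV,
      inConflict_incidenceMatrixEV_of_adj (hdeg u) (hdeg v)⟩⟩⟩

end MPP
end
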